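/- arXiv:1511.07098 — 4 statements merged into one kernel-verified Lean document; each statement's English description precedes it below -/
import Mathlib

section
/- Fix a real pair (x, t) with x > 0. Define T = {λ ∈ ℝ \ {0} : 0 ≤ t ∧ t ≤ (x^λ - 1)/λ} ∪ {λ ∈ ℝ \ {0} : (x^λ - 1)/λ ≤ t ∧ t < 0}. Then T is the intersection of ℝ \ {0} with a set that is either empty, all of ℝ, an interval of the form [c, ∞), or an interval of the form (-∞, d]. -/
open Real Set Filter Topology

/-- Classification of closed upper sets in ℝ. -/
lemma closed_upperSet_class (S : Set ℝ) (hS : IsClosed S) (hU : IsUpperSet S) :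
    S = ∅ ∨ S = Set.univ ∨ (∃ c : ℝ, S = Set.Ici c) := by
  rcases eq_empty_or_nonempty S with h | h
  · exact Or.inl h
  by_cases hB : BddBelow S
  · refine Or.inr (Or.inr ⟨sInf S, ?_⟩)
    apply Subset.antisymm
    · exact fun s hs => csInf_le hB hs
    · intro y hy
      exact hU hy (hS.csInf_mem h hB)
  · refine Or.inr (Or.inl ?_)
    ext y
    simp only [mem_univ, iff_true]
    obtain ⟨s, hs, hsy⟩ : ∃ s ∈ S, s < y := by
      by_contra hc
      push_neg at hc
      exact hB ⟨y, fun z hz => hc z hz⟩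
    exact hU hsy.le hs

lemma closed_lowerSet_class (S : Set ℝ) (hS : IsClosed S) (hU : IsLowerSet S) :
    S = ∅ ∨ S = Set.univ ∨ (∃ d : ℝ, S = Set.Iic d) := by
  rcases eq_empty_or_nonempty S with h | h
  · exact Or.inl h
  by_cases hB : BddAbove S
  · refine Or.inr (Or.inr ⟨sSup S, ?_⟩)
    apply Subset.antisymm
    · exact fun s hs => le_csSup hB hs
    · intro y hy
      exact hU hy (hS.csSup_mem h hB)
  · refine Or.inr (Or.inl ?_)
    ext y
    simp only [mem_univ, iff_true]
    obtain ⟨s, hs, hsy⟩ : ∃ s ∈ S, y < s := by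
      by_contra hc
      push_neg at hc
      exact hB ⟨y, fun z hz => hc z hz⟩
    exact hU hsy.le hs

theorem dual_subgraph_form (x t : ℝ) (hx : 0 < x) :
    ∃ S : Set ℝ,
      (S = ∅ ∨ S = Set.univ ∨ (∃ c : ℝ, S = Set.Ici c) ∨ (∃ d : ℝ, S = Set.Iic d)) ∧
      ({l : ℝ | l ≠ 0 ∧ 0 ≤ t ∧ t ≤ (Real.exp (l * Real.log x) - 1) / l} ∪
       {l : ℝ | l ≠ 0 ∧ (Real.exp (l * Real.log x) - 1) / l ≤ t ∧ t < 0}) =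
      {l : ℝ | l ≠ 0} ∩ S := by
  set a : ℝ := Real.log x with ha
  set F : ℝ → ℝ := fun l => Real.exp (l * a) with hF
  -- F is convex
  have hconv : ConvexOn ℝ Set.univ F := by
    have h := convexOn_exp.comp_affineMap (LinearMap.toSpanSingleton ℝ ℝ a).toAffineMap
    simpa [hF, Function.comp_def, LinearMap.toSpanSingleton_apply, smul_eq_mul,
      mul_comm] using h
  -- F has derivative a at 0
  have hderiv : ∀ l : ℝ, HasDerivAt F (a * Real.exp (l * a)) l := by
    intro l
    have h1 : HasDerivAt (fun l : ℝ => l * a) a l := hasDerivAt_mul_const a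
    have := (Real.hasDerivAt_exp (l * a)).comp l h1
    rw [mul_comm a]
    exact this
  have hd0 : HasDerivAt F a 0 := by simpa using hderiv 0
  -- define g
  set g : ℝ → ℝ := fun l => if l = 0 then a else (Real.exp (l * a) - 1) / l with hg
  have hgslope : ∀ l : ℝ, l ≠ 0 → g l = slope F 0 l := by
    intro l hl
    simp [hg, hF, slope_def_field, hl]
  -- g is monotone
  have hgmono : Monotone g := by
    intro u v huv
    rcases eq_or_lt_of_le huv with rfl | huv
    · exact le_rfl
    rcases eq_or_ne u 0 with rfl | hu
    · rw [hgslope v huv.ne', hg]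
      simpa using hconv.le_slope_of_hasDerivAt (mem_univ 0) (mem_univ v) huv hd0
    rcases eq_or_ne v 0 with rfl | hv
    · rw [hgslope u hu, hg, slope_comm]
      simpa using hconv.slope_le_of_hasDerivAt (mem_univ u) (mem_univ 0) huv hd0
    · rw [hgslope u hu, hgslope v hv]
      exact hconv.slope_mono (mem_univ 0) ⟨mem_univ u, hu⟩ ⟨mem_univ v, hv⟩ huv.le
  -- g is continuous
  have hgcont : Continuous g := by
    rw [continuous_iff_continuousAt]
    intro l
    rcases eq_or_ne l 0 with rfl | hl
    · have htend : Tendsto (slope F 0) (𝓝[≠] 0) (𝓝 a) :=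
        hasDerivAt_iff_tendsto_slope.mp hd0
      have htend' : Tendsto g (𝓝[≠] 0) (𝓝 a) := by
        refine htend.congr' ?_
        filter_upwards [self_mem_nhdsWithin] with y hy
        exact (hgslope y hy).symm
      have : Tendsto g (𝓝 0) (𝓝 a) := by
        rw [← nhdsNE_sup_pure, tendsto_sup]
        exact ⟨htend', by simpa [hg] using tendsto_pure_nhds g 0⟩
      simpa [ContinuousAt, hg] using this
    · have heq : g =ᶠ[𝓝 l] fun y => (Real.exp (y * a) - 1) / y := by
        filter_upwards [isOpen_compl_singleton.mem_nhds hl] with y hy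
        simp [hg, if_neg (show y ≠ 0 from hy)]
      refine ContinuousAt.congr ?_ heq.symm
      exact ContinuousAt.div (by fun_prop) continuousAt_id hl
  rcases le_or_gt 0 t with h0t | h0t
  · -- t ≥ 0 : S = {l | t ≤ g l}
    refine ⟨{l | t ≤ g l}, ?_, ?_⟩
    · have hclosed : IsClosed {l : ℝ | t ≤ g l} :=
        isClosed_Ici.preimage hgcont
      have hupper : IsUpperSet {l : ℝ | t ≤ g l} :=
        fun u v huv hu => le_trans hu (hgmono huv)
      rcases closed_upperSet_class _ hclosed hupper with h | h | h
      · exact Or.inl h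
      · exact Or.inr (Or.inl h)
      · exact Or.inr (Or.inr (Or.inl h))
    · ext l
      simp only [mem_union, mem_setOf_eq, mem_inter_iff]
      constructor
      · rintro (⟨hl, _, hle⟩ | ⟨hl, _, hlt⟩)
        · exact ⟨hl, by rw [hg]; simp [hl]; exact hle⟩
        · exact absurd h0t (not_le.mpr hlt)
      · rintro ⟨hl, hle⟩
        refine Or.inl ⟨hl, h0t, ?_⟩
        have := hle
        rw [hg] at this
        simpa [hl] using this
  · -- t < 0 : S = {l | g l ≤ t}
    refine ⟨{l | g l ≤ t}, ?_, ?_⟩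
    · have hclosed : IsClosed {l : ℝ | g l ≤ t} :=
        isClosed_Iic.preimage hgcont
      have hlower : IsLowerSet {l : ℝ | g l ≤ t} :=
        fun u v huv hu => le_trans (hgmono huv) hu
      rcases closed_lowerSet_class _ hclosed hlower with h | h | h
      · exact Or.inl h
      · exact Or.inr (Or.inl h)
      · exact Or.inr (Or.inr (Or.inr h))
    · ext l
      simp only [mem_union, mem_setOf_eq, mem_inter_iff]
      constructor
      · rintro (⟨hl, h0, _⟩ | ⟨hl, hle, _⟩)
        · exact absurd h0t (not_lt.mpr h0)
        · exact ⟨hl, by rw [hg]; simp [hl]; exact hle⟩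
      · rintro ⟨hl, hle⟩
        refine Or.inr ⟨hl, ?_, h0t⟩
        rw [hg] at hle
        simpa [hl] using hle
end

section
/- For the family A = {S_λ : λ ∈ ℝ \ {0}} of subgraphs S_λ = {(x,t) ∈ ℝ² : x > 0 ∧ ((0 ≤ t ∧ t ≤ (x^λ-1)/λ) ∨ (0 ≥ t ∧ t ≥ (x^λ-1)/λ))} of the Box–Cox transforms, the shatter function satisfies Δ_A(n) ≤ n + 1 for every n; that is, for every finite set F ⊆ ℝ² with |F| = n, the number of distinct traces {S_λ ∩ F : λ ∈ ℝ \ {0}} is at most n + 1. -/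
open Real

private lemma exp_ratio_mono {s t : ℝ} (hs : s ≠ 0) (ht : t ≠ 0) (hst : s ≤ t) :
    (Real.exp s - 1) / s ≤ (Real.exp t - 1) / t := by
  rcases hs.lt_or_gt with hs' | hs'
  · rcases ht.lt_or_gt with ht' | ht'
    · -- s ≤ t < 0
      have hw1 : (0:ℝ) ≤ t / s := le_of_lt (div_pos_of_neg_of_neg ht' hs')
      have hw2 : (0:ℝ) ≤ 1 - t / s := by
        have : t / s ≤ 1 := by rw [div_le_iff_of_neg hs']; linarith
        linarith
      have hcx := convexOn_exp.2 (Set.mem_univ (0:ℝ)) (Set.mem_univ s) hw2 hw1 (by ring)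
      simp only [smul_eq_mul, mul_zero, zero_add, Real.exp_zero, mul_one] at hcx
      rw [div_mul_cancel₀ t hs] at hcx
      -- hcx : exp t ≤ (1 - t/s) + t/s * exp s
      have h' := mul_le_mul_of_nonpos_right hcx (le_of_lt hs')
      have heq : ((1 - t / s) + t / s * Real.exp s) * s = s - t + t * Real.exp s := by
        field_simp
      rw [heq] at h'
      have e1 : (Real.exp s - 1) / s = (1 - Real.exp s) / (-s) := by
        rw [div_neg, ← neg_div]; ring_nf
      have e2 : (Real.exp t - 1) / t = (1 - Real.exp t) / (-t) := by
        rw [div_neg, ← neg_div]; ring_nf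
      rw [e1, e2, div_le_div_iff₀ (neg_pos.2 hs') (neg_pos.2 ht')]
      nlinarith [h']
    · -- s < 0 < t
      have h1 : (Real.exp s - 1) / s ≤ 1 := by
        rw [div_le_iff_of_neg hs']
        nlinarith [Real.add_one_le_exp s]
      have h2 : (1:ℝ) ≤ (Real.exp t - 1) / t := by
        rw [le_div_iff₀ ht']
        nlinarith [Real.add_one_le_exp t]
      linarith
  · -- 0 < s ≤ t
    have ht' : 0 < t := lt_of_lt_of_le hs' hst
    have hw1 : (0:ℝ) ≤ s / t := le_of_lt (div_pos hs' ht')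
    have hw2 : (0:ℝ) ≤ 1 - s / t := by
      have : s / t ≤ 1 := (div_le_one ht').2 hst
      linarith
    have hcx := convexOn_exp.2 (Set.mem_univ (0:ℝ)) (Set.mem_univ t) hw2 hw1 (by ring)
    simp only [smul_eq_mul, mul_zero, zero_add, Real.exp_zero, mul_one] at hcx
    rw [div_mul_cancel₀ s ht'.ne'] at hcx
    have h' := mul_le_mul_of_nonneg_right hcx (le_of_lt ht')
    have heq : ((1 - s / t) + s / t * Real.exp t) * t = t - s + s * Real.exp t := by
      field_simp
    rw [heq] at h'
    rw [div_le_div_iff₀ hs' ht']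
    nlinarith [h']

private lemma bc_mono (u : ℝ) {a b : ℝ} (ha : a ≠ 0) (hb : b ≠ 0) (hab : a ≤ b) :
    (Real.exp (a * u) - 1) / a ≤ (Real.exp (b * u) - 1) / b := by
  rcases lt_trichotomy u 0 with hu | hu | hu
  · have hu0 : u ≠ 0 := hu.ne
    have h := exp_ratio_mono (mul_ne_zero hb hu0) (mul_ne_zero ha hu0)
      (by nlinarith : b * u ≤ a * u)
    have ea : (Real.exp (a * u) - 1) / a = ((Real.exp (a * u) - 1) / (a * u)) * u := by
      field_simp
    have eb : (Real.exp (b * u) - 1) / b = ((Real.exp (b * u) - 1) / (b * u)) * u := by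
      field_simp
    rw [ea, eb]
    exact mul_le_mul_of_nonpos_right h hu.le
  · simp [hu]
  · have hu0 : u ≠ 0 := hu.ne'
    have h := exp_ratio_mono (mul_ne_zero ha hu0) (mul_ne_zero hb hu0)
      (by nlinarith : a * u ≤ b * u)
    have ea : (Real.exp (a * u) - 1) / a = ((Real.exp (a * u) - 1) / (a * u)) * u := by
      field_simp
    have eb : (Real.exp (b * u) - 1) / b = ((Real.exp (b * u) - 1) / (b * u)) * u := by
      field_simp
    rw [ea, eb]
    exact mul_le_mul_of_nonneg_right h hu.le

theorem boxCox_shatter_bound (n : ℕ) (F : Finset (ℝ × ℝ)) (hF : F.card = n) :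
    {G : Set (ℝ × ℝ) | ∃ l : ℝ, l ≠ 0 ∧
        G = {p : ℝ × ℝ | 0 < p.1 ∧
              ((0 ≤ p.2 ∧ p.2 ≤ (Real.exp (l * Real.log p.1) - 1) / l) ∨
               (0 ≥ p.2 ∧ p.2 ≥ (Real.exp (l * Real.log p.1) - 1) / l))} ∩ ↑F}.encard
      ≤ (n : ℕ∞) + 1 := by
  classical
  set P : ℝ → ℝ × ℝ → Prop := fun l p => 0 < p.1 ∧
      ((0 ≤ p.2 ∧ p.2 ≤ (Real.exp (l * Real.log p.1) - 1) / l) ∨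
       (0 ≥ p.2 ∧ p.2 ≥ (Real.exp (l * Real.log p.1) - 1) / l)) with hPdef
  set T : ℝ → Finset (ℝ × ℝ) := fun l => F.filter (fun p => P l p) with hTdef
  have hTmem : ∀ {l : ℝ} {p : ℝ × ℝ}, p ∈ T l ↔ p ∈ F ∧ P l p := by
    intro l p; simp [hTdef]
  have hbmono : ∀ {l1 l2 : ℝ}, l1 ≠ 0 → l2 ≠ 0 → l1 ≤ l2 → ∀ x : ℝ,
      (Real.exp (l1 * Real.log x) - 1) / l1 ≤ (Real.exp (l2 * Real.log x) - 1) / l2 :=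
    fun h1 h2 h12 x => bc_mono (Real.log x) h1 h2 h12
  have hmono_pos : ∀ {l1 l2 : ℝ}, l1 ≠ 0 → l2 ≠ 0 → l1 ≤ l2 →
      ∀ p : ℝ × ℝ, 0 < p.2 → P l1 p → P l2 p := by
    intro l1 l2 h1 h2 h12 p hp hP
    obtain ⟨hx, hcase⟩ := hP
    refine ⟨hx, Or.inl ?_⟩
    rcases hcase with ⟨h0, hle⟩ | ⟨h0, _⟩
    · exact ⟨h0, hle.trans (hbmono h1 h2 h12 p.1)⟩
    · linarith
  have hmono_neg : ∀ {l1 l2 : ℝ}, l1 ≠ 0 → l2 ≠ 0 → l1 ≤ l2 →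
      ∀ p : ℝ × ℝ, p.2 < 0 → P l2 p → P l1 p := by
    intro l1 l2 h1 h2 h12 p hp hP
    obtain ⟨hx, hcase⟩ := hP
    refine ⟨hx, Or.inr ?_⟩
    rcases hcase with ⟨h0, _⟩ | ⟨h0, hge⟩
    · linarith
    · exact ⟨h0, le_trans (hbmono h1 h2 h12 p.1) hge⟩
  have hzero : ∀ {l : ℝ}, ∀ p : ℝ × ℝ, p.2 = 0 → (P l p ↔ 0 < p.1) := by
    intro l p hp
    constructor
    · exact fun h => h.1
    · intro hx
      refine ⟨hx, ?_⟩
      rcases le_total 0 ((Real.exp (l * Real.log p.1) - 1) / l) with h | h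
      · exact Or.inl ⟨hp.ge, hp.le.trans h⟩
      · exact Or.inr ⟨hp.le, h.trans hp.ge⟩
  -- key: equal counts imply equal traces, for l1 ≤ l2
  have hkey : ∀ {l1 l2 : ℝ}, l1 ≠ 0 → l2 ≠ 0 → l1 ≤ l2 →
      ((T l1).filter (fun p => 0 < p.2)).card
        + ((F.filter (fun p => p.2 < 0)).filter (fun p => p ∉ T l1)).card
      = ((T l2).filter (fun p => 0 < p.2)).card
        + ((F.filter (fun p => p.2 < 0)).filter (fun p => p ∉ T l2)).card
      → T l1 = T l2 := by
    intro l1 l2 h1 h2 h12 hμeq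
    have hsub1 : (T l1).filter (fun p => 0 < p.2) ⊆ (T l2).filter (fun p => 0 < p.2) := by
      intro p hp
      simp only [Finset.mem_filter] at hp ⊢
      obtain ⟨hpT, hp2⟩ := hp
      obtain ⟨hpF, hP⟩ := hTmem.mp hpT
      exact ⟨hTmem.mpr ⟨hpF, hmono_pos h1 h2 h12 p hp2 hP⟩, hp2⟩
    have hsub2 : (F.filter (fun p => p.2 < 0)).filter (fun p => p ∉ T l1) ⊆
        (F.filter (fun p => p.2 < 0)).filter (fun p => p ∉ T l2) := by
      intro p hp
      simp only [Finset.mem_filter] at hp ⊢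
      obtain ⟨⟨hpF, hp2⟩, hnot⟩ := hp
      refine ⟨⟨hpF, hp2⟩, fun hmem => hnot ?_⟩
      obtain ⟨_, hP⟩ := hTmem.mp hmem
      exact hTmem.mpr ⟨hpF, hmono_neg h1 h2 h12 p hp2 hP⟩
    have hc1 := Finset.card_le_card hsub1
    have hc2 := Finset.card_le_card hsub2
    have he1 : (T l1).filter (fun p => 0 < p.2) = (T l2).filter (fun p => 0 < p.2) :=
      Finset.eq_of_subset_of_card_le hsub1 (by omega)
    have he2 : (F.filter (fun p => p.2 < 0)).filter (fun p => p ∉ T l1)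
        = (F.filter (fun p => p.2 < 0)).filter (fun p => p ∉ T l2) :=
      Finset.eq_of_subset_of_card_le hsub2 (by omega)
    ext p
    rcases lt_trichotomy p.2 0 with hp2 | hp2 | hp2
    · constructor
      · intro hp
        obtain ⟨hpF, _⟩ := hTmem.mp hp
        by_contra hnot
        have : p ∈ (F.filter (fun p => p.2 < 0)).filter (fun p => p ∉ T l2) := by
          simp only [Finset.mem_filter]; exact ⟨⟨hpF, hp2⟩, hnot⟩
        rw [← he2] at this
        simp only [Finset.mem_filter] at this
        exact this.2 hp
      · intro hp
        obtain ⟨hpF, hP⟩ := hTmem.mp hp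
        exact hTmem.mpr ⟨hpF, hmono_neg h1 h2 h12 p hp2 hP⟩
    · constructor <;> intro hp <;> obtain ⟨hpF, hP⟩ := hTmem.mp hp <;>
        exact hTmem.mpr ⟨hpF, (hzero p hp2).mpr ((hzero p hp2).mp hP)⟩
    · constructor
      · intro hp
        have : p ∈ (T l2).filter (fun p => 0 < p.2) := by
          rw [← he1]; simp only [Finset.mem_filter]; exact ⟨hp, hp2⟩
        exact (Finset.mem_filter.mp this).1
      · intro hp
        have : p ∈ (T l1).filter (fun p => 0 < p.2) := by
          rw [he1]; simp only [Finset.mem_filter]; exact ⟨hp, hp2⟩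
        exact (Finset.mem_filter.mp this).1
  -- the counting function on traces (as sets)
  set ν : Set (ℝ × ℝ) → ℕ := fun G =>
    (F.filter (fun p => p ∈ G ∧ 0 < p.2)).card
      + (F.filter (fun p => p.2 < 0 ∧ p ∉ G)).card with hνdef
  have hSl : ∀ l : ℝ, ({p : ℝ × ℝ | 0 < p.1 ∧
        ((0 ≤ p.2 ∧ p.2 ≤ (Real.exp (l * Real.log p.1) - 1) / l) ∨
         (0 ≥ p.2 ∧ p.2 ≥ (Real.exp (l * Real.log p.1) - 1) / l))} ∩ ↑F)
      = (↑(T l) : Set (ℝ × ℝ)) := by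
    intro l
    ext p
    simp only [Set.mem_inter_iff, Set.mem_setOf_eq, Finset.coe_filter, hTdef,
      Finset.mem_coe, hTmem, hPdef]
    tauto
  have hνT : ∀ l : ℝ, ν ↑(T l) =
      ((T l).filter (fun p => 0 < p.2)).card
        + ((F.filter (fun p => p.2 < 0)).filter (fun p => p ∉ T l)).card := by
    intro l
    simp only [hνdef]
    congr 1
    · congr 1
      ext p
      simp only [Finset.mem_filter, Finset.mem_coe, hTmem]
      tauto
    · congr 1
      ext p
      simp only [Finset.mem_filter, Finset.mem_coe]
      tauto
  have hset : {G : Set (ℝ × ℝ) | ∃ l : ℝ, l ≠ 0 ∧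
        G = {p : ℝ × ℝ | 0 < p.1 ∧
              ((0 ≤ p.2 ∧ p.2 ≤ (Real.exp (l * Real.log p.1) - 1) / l) ∨
               (0 ≥ p.2 ∧ p.2 ≥ (Real.exp (l * Real.log p.1) - 1) / l))} ∩ ↑F}
      = {G : Set (ℝ × ℝ) | ∃ l : ℝ, l ≠ 0 ∧ G = ↑(T l)} := by
    ext G
    simp only [Set.mem_setOf_eq]
    constructor
    · rintro ⟨l, hl, rfl⟩; exact ⟨l, hl, hSl l⟩
    · rintro ⟨l, hl, rfl⟩; exact ⟨l, hl, (hSl l).symm⟩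
  rw [hset]
  have hinj : Set.InjOn ν {G : Set (ℝ × ℝ) | ∃ l : ℝ, l ≠ 0 ∧ G = ↑(T l)} := by
    rintro G1 ⟨l1, h1, rfl⟩ G2 ⟨l2, h2, rfl⟩ hν
    rw [hνT l1, hνT l2] at hν
    rcases le_total l1 l2 with h12 | h12
    · rw [hkey h1 h2 h12 hν]
    · rw [hkey h2 h1 h12 hν.symm]
  have hle : ∀ G ∈ {G : Set (ℝ × ℝ) | ∃ l : ℝ, l ≠ 0 ∧ G = ↑(T l)}, ν G ≤ n := by
    rintro G ⟨l, hl, rfl⟩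
    rw [hνT l]
    have h1 : ((T l).filter (fun p => 0 < p.2)).card ≤ (F.filter (fun p => 0 < p.2)).card := by
      apply Finset.card_le_card
      intro p hp
      simp only [Finset.mem_filter] at hp ⊢
      exact ⟨(hTmem.mp hp.1).1, hp.2⟩
    have h2 : ((F.filter (fun p => p.2 < 0)).filter (fun p => p ∉ T l)).card
        ≤ (F.filter (fun p => ¬ 0 < p.2)).card := by
      apply Finset.card_le_card
      intro p hp
      simp only [Finset.mem_filter] at hp ⊢
      exact ⟨hp.1.1, by linarith [hp.1.2]⟩
    have h3 := Finset.card_filter_add_card_filter_not (s := F)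
      (p := fun p : ℝ × ℝ => 0 < p.2)
    omega
  calc {G : Set (ℝ × ℝ) | ∃ l : ℝ, l ≠ 0 ∧ G = ↑(T l)}.encard
      = (ν '' {G : Set (ℝ × ℝ) | ∃ l : ℝ, l ≠ 0 ∧ G = ↑(T l)}).encard :=
        (hinj.encard_image).symm
    _ ≤ (↑(Finset.range (n + 1)) : Set ℕ).encard := by
        apply Set.encard_mono
        rintro _ ⟨G, hG, rfl⟩
        simp only [Finset.coe_range, Set.mem_Iio]
        exact Nat.lt_succ_of_le (hle G hG)
    _ = ((n + 1 : ℕ) : ℕ∞) := by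
        rw [Set.encard_coe_eq_coe_finsetCard, Finset.card_range]
    _ = (n : ℕ∞) + 1 := by push_cast; rfl
end

section
/- Fix N ≥ 1, distinct points a₁, …, a_N in the open interval (0,1), and an enumeration X₁, …, X_{2^N} of all subsets of A = {a₁, …, a_N}. Suppose for each i there is a set I_i ⊆ (0,1) with I_i ∩ A = X_i. Let J_i = {i + y : y ∈ I_i}, let J = ⋃_{i=1}^{2^N} J_i, and let F = {{x + j : j ∈ J} : x ∈ ℝ} be the family of all real translates of J. Then F shatters A; in particular the VC-dimension of F is at least N. -/
theorem translates_shatter (N : ℕ) (hN : 1 ≤ N) (a : Fin N → ℝ)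
    (ha : Function.Injective a) (hmem : ∀ i, a i ∈ Set.Ioo (0 : ℝ) 1)
    (X : Fin (2 ^ N) → Set ℝ)
    (hX : ∀ Y ⊆ Set.range a, ∃ i, X i = Y)
    (I : Fin (2 ^ N) → Set ℝ)
    (hI : ∀ i, I i ⊆ Set.Ioo (0 : ℝ) 1)
    (hIA : ∀ i, I i ∩ Set.range a = X i) :
    ∀ Y ⊆ Set.range a, ∃ x : ℝ,
      ((fun j => x + j) ''
        ⋃ i : Fin (2 ^ N), (fun y => ((i : ℕ) + 1 : ℝ) + y) '' I i) ∩ Set.range a = Y := by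
  intro Y hY
  obtain ⟨i, hiY⟩ := hX Y hY
  refine ⟨-(((i : ℕ) : ℝ) + 1), ?_⟩
  ext z
  constructor
  · rintro ⟨⟨j, hj, rfl⟩, m, ham⟩
    simp only [Set.mem_iUnion, Set.mem_image] at hj
    obtain ⟨k, y, hy, rfl⟩ := hj
    have hyI : y ∈ Set.Ioo (0:ℝ) 1 := hI k hy
    have hzI : a m ∈ Set.Ioo (0:ℝ) 1 := hmem m
    have heq : a m = ((k : ℕ) : ℝ) - ((i : ℕ) : ℝ) + y := by rw [ham]; ring
    have hki : k = i := by
      by_contra hne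
      have hne' : (k : ℕ) ≠ (i : ℕ) := fun h => hne (Fin.ext h)
      have h1 : (1:ℝ) ≤ |((k : ℕ) : ℝ) - ((i : ℕ) : ℝ)| := by
        rcases hne'.lt_or_gt with h | h
        · have h2 : ((k:ℕ):ℝ) + 1 ≤ ((i:ℕ):ℝ) := by exact_mod_cast h
          rw [abs_sub_comm, abs_of_nonneg (by linarith)]; linarith
        · have h2 : ((i:ℕ):ℝ) + 1 ≤ ((k:ℕ):ℝ) := by exact_mod_cast h
          rw [abs_of_nonneg (by linarith)]; linarith
      rw [heq] at hzI
      obtain ⟨h0, h1'⟩ := hzI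
      obtain ⟨hy0, hy1⟩ := hyI
      rcases abs_cases (((k : ℕ) : ℝ) - ((i : ℕ) : ℝ)) with ⟨he, _⟩ | ⟨he, _⟩ <;>
        rw [he] at h1 <;> linarith
    subst hki
    have hay : a m = y := by rw [heq]; ring
    have hgoal : -(((k : ℕ) : ℝ) + 1) + (((k : ℕ) : ℝ) + 1 + y) = y := by ring
    show -(((k : ℕ) : ℝ) + 1) + (((k : ℕ) : ℝ) + 1 + y) ∈ Y
    rw [hgoal, ← hiY, ← hIA k]
    exact ⟨hy, ⟨m, hay⟩⟩
  · intro hz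
    have hz' : z ∈ I i ∩ Set.range a := by rw [hIA i, hiY]; exact hz
    refine ⟨⟨(((i : ℕ) : ℝ) + 1) + z, ?_, by ring⟩, hz'.2⟩
    simp only [Set.mem_iUnion, Set.mem_image]
    exact ⟨i, z, hz'.1, rfl⟩
end

section
/- Let A be a family of subsets of a type α and suppose the dual shatter bound holds: no collection of m + 1 sets from A generates 2^{m+1} nonempty Boolean atoms (i.e., the dual VC-dimension dim*(A) is at most m). Then the VC-dimension of A is strictly less than 2^{m+1}. -/
theorem assouad_dual_bound {α : Type*} (A : Set (Set α)) (m : ℕ)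
    (hdual : ∀ S : Fin (m + 1) → Set α, (∀ i, S i ∈ A) →
      ¬ ({B : Set α | B.Nonempty ∧ ∃ I : Finset (Fin (m + 1)),
            B = (⋂ i ∈ I, S i) ∩ ⋂ i ∈ Iᶜ, (S i)ᶜ}.encard = 2 ^ (m + 1))) :
    ∀ X : Finset α, (∀ Y ⊆ (↑X : Set α), ∃ S ∈ A, S ∩ ↑X = Y) →
      X.card < 2 ^ (m + 1) := by
  intro X hX
  by_contra h
  push_neg at h
  have hcard : Fintype.card (Finset (Fin (m + 1))) ≤ Fintype.card {x // x ∈ X} := by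
    simpa [Fintype.card_finset] using h
  obtain ⟨e⟩ := Function.Embedding.nonempty_of_card_le hcard
  have hsel : ∀ i : Fin (m + 1), ∃ S ∈ A,
      S ∩ ↑X = {a : α | ∃ I : Finset (Fin (m + 1)), i ∈ I ∧ (e I : α) = a} := by
    intro i
    apply hX
    rintro a ⟨I, hi, rfl⟩
    exact (e I).2
  choose S hSA hSX using hsel
  have key : ∀ (I : Finset (Fin (m + 1))) i, ((e I : α) ∈ S i ↔ i ∈ I) := by
    intro I i
    constructor
    · intro hmem
      have hm : (e I : α) ∈ S i ∩ ↑X := ⟨hmem, (e I).2⟩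
      rw [hSX] at hm
      obtain ⟨J, hiJ, hJ⟩ := hm
      have : J = I := e.injective (Subtype.ext hJ)
      exact this ▸ hiJ
    · intro hi
      have hm : (e I : α) ∈ S i ∩ ↑X := by
        rw [hSX]; exact ⟨I, hi, rfl⟩
      exact hm.1
  refine hdual S hSA ?_
  set f : Finset (Fin (m + 1)) → Set α :=
    fun I => (⋂ i ∈ I, S i) ∩ ⋂ i ∈ Iᶜ, (S i)ᶜ with hf
  have hatom : ∀ I : Finset (Fin (m + 1)), (e I : α) ∈ f I := by
    intro I
    refine ⟨Set.mem_iInter₂.2 fun i hi => (key I i).2 hi,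
      Set.mem_iInter₂.2 fun i hi => ?_⟩
    rw [Finset.mem_compl] at hi
    exact fun hmem => hi ((key I i).1 hmem)
  have hinj : Function.Injective f := by
    intro I J hIJ
    have hx : (e I : α) ∈ f J := hIJ ▸ hatom I
    obtain ⟨h1, h2⟩ := hx
    ext i
    constructor
    · intro hiI
      by_contra hiJ
      exact (Set.mem_iInter₂.1 h2 i (Finset.mem_compl.2 hiJ)) ((key I i).2 hiI)
    · intro hiJ
      exact (key I i).1 (Set.mem_iInter₂.1 h1 i hiJ)
  have hset : {B : Set α | B.Nonempty ∧ ∃ I : Finset (Fin (m + 1)),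
      B = (⋂ i ∈ I, S i) ∩ ⋂ i ∈ Iᶜ, (S i)ᶜ} = Set.range f := by
    ext B
    constructor
    · rintro ⟨-, I, rfl⟩; exact ⟨I, rfl⟩
    · rintro ⟨I, rfl⟩; exact ⟨⟨_, hatom I⟩, I, rfl⟩
  rw [hset, ← Set.image_univ, hinj.encard_image _, Set.encard_univ]
  rw [ENat.card_eq_coe_fintype_card]
  simp [Fintype.card_finset]
end
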